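/- Let C₁, C₂, C₃ be three circles in the plane, no two equal, such that each pair intersects in exactly two points. For {i,j,k} = {1,2,3}, let ℓᵢ be the line through the two intersection points of Cⱼ and Cₖ. Then ℓ₁, ℓ₂, ℓ₃ are concurrent in a point or mutually parallel. -/
import Mathlib

open Metric RealInnerProductSpace Affine

noncomputable section

abbrev E2 := EuclideanSpace ℝ (Fin 2)

lemma finrank_E2 : Module.finrank ℝ E2 = 2 := by simp

lemma finrank_orth {v : E2} (hv : v ≠ 0) : Module.finrank ℝ ((ℝ ∙ v)ᗮ) = 1 := by
  have h := Submodule.finrank_add_finrank_orthogonal (K := ℝ ∙ v) (E := E2)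
  rw [finrank_span_singleton hv, finrank_E2] at h
  omega

lemma radical_axis (o₁ o₂ : E2) (r₁ r₂ : ℝ)
    (hne : sphere o₁ r₁ ≠ sphere o₂ r₂)
    (hc : (sphere o₁ r₁ ∩ sphere o₂ r₂).ncard = 2) :
    o₁ ≠ o₂ ∧
    ((affineSpan ℝ (sphere o₁ r₁ ∩ sphere o₂ r₂) : Set E2) =
        {x | ‖x - o₁‖ ^ 2 - r₁ ^ 2 = ‖x - o₂‖ ^ 2 - r₂ ^ 2}) ∧
    (affineSpan ℝ (sphere o₁ r₁ ∩ sphere o₂ r₂)).direction = (ℝ ∙ (o₂ - o₁))ᗮ := by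
  obtain ⟨p, q, hpq, hset⟩ := Set.ncard_eq_two.mp hc
  have hp : p ∈ sphere o₁ r₁ ∩ sphere o₂ r₂ := by rw [hset]; simp
  have hq : q ∈ sphere o₁ r₁ ∩ sphere o₂ r₂ := by rw [hset]; simp
  have hpow : ∀ x ∈ sphere o₁ r₁ ∩ sphere o₂ r₂,
      ‖x - o₁‖ ^ 2 - r₁ ^ 2 = ‖x - o₂‖ ^ 2 - r₂ ^ 2 := by
    rintro x ⟨h1, h2⟩
    rw [mem_sphere_iff_norm] at h1 h2
    rw [h1, h2]; ring
  have ho : o₁ ≠ o₂ := by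
    rintro rfl
    have h1 := hp.1; have h2 := hp.2
    rw [mem_sphere] at h1 h2
    exact hne (by rw [← h1, ← h2])
  have hv : o₂ - o₁ ≠ 0 := sub_ne_zero.mpr (Ne.symm ho)
  -- pointwise characterization
  have key : ∀ x : E2, (‖x - o₁‖ ^ 2 - r₁ ^ 2 = ‖x - o₂‖ ^ 2 - r₂ ^ 2) ↔
      ⟪o₂ - o₁, x - p⟫ = 0 := by
    intro x
    have hpp := hpow p hp
    have e : ∀ y : E2, ‖y - o₁‖ ^ 2 - ‖y - o₂‖ ^ 2 =
        2 * ⟪o₂ - o₁, y⟫ + (‖o₁‖ ^ 2 - ‖o₂‖ ^ 2) := by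
      intro y
      rw [← real_inner_self_eq_norm_sq, ← real_inner_self_eq_norm_sq,
        ← real_inner_self_eq_norm_sq, ← real_inner_self_eq_norm_sq]
      simp only [inner_sub_left, inner_sub_right, real_inner_comm y o₁, real_inner_comm y o₂]
      ring
    have ex := e x
    have ep := e p
    rw [inner_sub_right]
    constructor <;> intro h <;> nlinarith [ex, ep, hpp, h]
  set M := AffineSubspace.mk' p ((ℝ ∙ (o₂ - o₁))ᗮ) with hM
  have hMmem : ∀ x : E2, x ∈ M ↔ ⟪o₂ - o₁, x - p⟫ = 0 := by
    intro x
    rw [hM, AffineSubspace.mem_mk',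
      Submodule.mem_orthogonal_singleton_iff_inner_right]
    rfl
  -- span ≤ M
  have hle : affineSpan ℝ (sphere o₁ r₁ ∩ sphere o₂ r₂) ≤ M := by
    rw [affineSpan_le]
    intro x hx
    have := hpow x hx
    exact (hMmem x).mpr ((key x).mp this)
  -- directions
  have hdirM : M.direction = (ℝ ∙ (o₂ - o₁))ᗮ := AffineSubspace.direction_mk' _ _
  have hdirle : (affineSpan ℝ (sphere o₁ r₁ ∩ sphere o₂ r₂)).direction ≤ (ℝ ∙ (o₂ - o₁))ᗮ :=
    hdirM ▸ AffineSubspace.direction_le hle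
  have hqp : q - p ∈ (affineSpan ℝ (sphere o₁ r₁ ∩ sphere o₂ r₂)).direction := by
    exact AffineSubspace.vsub_mem_direction (mem_affineSpan ℝ hq) (mem_affineSpan ℝ hp)
  have hdir : (affineSpan ℝ (sphere o₁ r₁ ∩ sphere o₂ r₂)).direction = (ℝ ∙ (o₂ - o₁))ᗮ := by
    apply Submodule.eq_of_le_of_finrank_le hdirle
    rw [finrank_orth hv]
    have h1 : (ℝ ∙ (q - p)) ≤ (affineSpan ℝ (sphere o₁ r₁ ∩ sphere o₂ r₂)).direction :=
      by rwa [Submodule.span_singleton_le_iff_mem]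
    calc 1 = Module.finrank ℝ (ℝ ∙ (q - p)) :=
          (finrank_span_singleton (sub_ne_zero.mpr hpq.symm)).symm
      _ ≤ _ := Submodule.finrank_mono h1
  have heq : affineSpan ℝ (sphere o₁ r₁ ∩ sphere o₂ r₂) = M := by
    apply AffineSubspace.ext_of_direction_eq (by rw [hdir, hdirM])
    exact ⟨p, mem_affineSpan ℝ hp, AffineSubspace.self_mem_mk' _ _⟩
  refine ⟨ho, ?_, hdir⟩
  ext x
  rw [heq]
  exact (hMmem x).trans (key x).symm

end

theorem radical_axes_concurrent_or_parallel
    (o₁ o₂ o₃ : EuclideanSpace ℝ (Fin 2)) (r₁ r₂ r₃ : ℝ)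
    (hr₁ : 0 < r₁) (hr₂ : 0 < r₂) (hr₃ : 0 < r₃)
    (h12 : sphere o₁ r₁ ≠ sphere o₂ r₂)
    (h13 : sphere o₁ r₁ ≠ sphere o₃ r₃)
    (h23 : sphere o₂ r₂ ≠ sphere o₃ r₃)
    (hc12 : (sphere o₁ r₁ ∩ sphere o₂ r₂).ncard = 2)
    (hc13 : (sphere o₁ r₁ ∩ sphere o₃ r₃).ncard = 2)
    (hc23 : (sphere o₂ r₂ ∩ sphere o₃ r₃).ncard = 2)
    (ℓ₁ ℓ₂ ℓ₃ : AffineSubspace ℝ (EuclideanSpace ℝ (Fin 2)))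
    (hℓ₁ : ℓ₁ = affineSpan ℝ (sphere o₂ r₂ ∩ sphere o₃ r₃))
    (hℓ₂ : ℓ₂ = affineSpan ℝ (sphere o₁ r₁ ∩ sphere o₃ r₃))
    (hℓ₃ : ℓ₃ = affineSpan ℝ (sphere o₁ r₁ ∩ sphere o₂ r₂)) :
    (∃ p, p ∈ ℓ₁ ∧ p ∈ ℓ₂ ∧ p ∈ ℓ₃) ∨
      (AffineSubspace.Parallel ℓ₁ ℓ₂ ∧ AffineSubspace.Parallel ℓ₂ ℓ₃) := by
  obtain ⟨ho12, hset3, hdir3⟩ := radical_axis o₁ o₂ r₁ r₂ h12 hc12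
  obtain ⟨ho13, hset2, hdir2⟩ := radical_axis o₁ o₃ r₁ r₃ h13 hc13
  obtain ⟨ho23, hset1, hdir1⟩ := radical_axis o₂ o₃ r₂ r₃ h23 hc23
  subst hℓ₁ hℓ₂ hℓ₃
  have hv12 : o₂ - o₁ ≠ 0 := sub_ne_zero.mpr (Ne.symm ho12)
  have hv13 : o₃ - o₁ ≠ 0 := sub_ne_zero.mpr (Ne.symm ho13)
  have hv23 : o₃ - o₂ ≠ 0 := sub_ne_zero.mpr (Ne.symm ho23)
  have hne1 : ((affineSpan ℝ (sphere o₂ r₂ ∩ sphere o₃ r₃)) : Set E2).Nonempty := by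
    exact Set.Nonempty.mono (subset_affineSpan ℝ _)
      (Set.nonempty_of_ncard_ne_zero (by omega))
  have hne2 : ((affineSpan ℝ (sphere o₁ r₁ ∩ sphere o₃ r₃)) : Set E2).Nonempty := by
    exact Set.Nonempty.mono (subset_affineSpan ℝ _)
      (Set.nonempty_of_ncard_ne_zero (by omega))
  have hne3 : ((affineSpan ℝ (sphere o₁ r₁ ∩ sphere o₂ r₂)) : Set E2).Nonempty := by
    exact Set.Nonempty.mono (subset_affineSpan ℝ _)
      (Set.nonempty_of_ncard_ne_zero (by omega))
  by_cases h : (ℝ ∙ (o₂ - o₁))ᗮ = (ℝ ∙ (o₃ - o₁))ᗮ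
  · -- parallel case
    right
    have hspan : (ℝ ∙ (o₂ - o₁)) = (ℝ ∙ (o₃ - o₁)) := by
      have := congrArg Submodule.orthogonal h
      rwa [Submodule.orthogonal_orthogonal, Submodule.orthogonal_orthogonal] at this
    have h23mem : o₃ - o₂ ∈ (ℝ ∙ (o₂ - o₁)) := by
      have h1 : o₃ - o₁ ∈ (ℝ ∙ (o₂ - o₁)) := hspan ▸ Submodule.mem_span_singleton_self _
      have h2 : o₂ - o₁ ∈ (ℝ ∙ (o₂ - o₁)) := Submodule.mem_span_singleton_self _
      have := Submodule.sub_mem _ h1 h2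
      simpa using this
    have hspan23 : (ℝ ∙ (o₃ - o₂)) = (ℝ ∙ (o₂ - o₁)) := by
      apply Submodule.eq_of_le_of_finrank_le
      · rwa [Submodule.span_singleton_le_iff_mem]
      · rw [finrank_span_singleton hv12, finrank_span_singleton hv23]
    have key : ∀ s t : AffineSubspace ℝ E2, (s : Set E2).Nonempty → (t : Set E2).Nonempty →
        s.direction = t.direction → s ∥ t := by
      intro s t hs ht hd
      rw [AffineSubspace.parallel_iff_direction_eq_and_eq_bot_iff_eq_bot]
      refine ⟨hd, ?_⟩
      constructor <;> rintro rfl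
      · exact absurd hs (by simp)
      · exact absurd ht (by simp)
    constructor
    · exact key _ _ hne1 hne2 (by rw [hdir1, hdir2, hspan23, hspan])
    · exact key _ _ hne2 hne3 (by rw [hdir2, hdir3]; exact h.symm)
  · -- concurrent case
    left
    have hf2 : Module.finrank ℝ ((ℝ ∙ (o₃ - o₁))ᗮ) = 1 := finrank_orth hv13
    have hf3 : Module.finrank ℝ ((ℝ ∙ (o₂ - o₁))ᗮ) = 1 := finrank_orth hv12
    have hinf : (ℝ ∙ (o₂ - o₁))ᗮ ⊓ (ℝ ∙ (o₃ - o₁))ᗮ = ⊥ := by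
      by_contra hb
      obtain ⟨x, hx, hx0⟩ := Submodule.exists_mem_ne_zero_of_ne_bot hb
      have e3 : (ℝ ∙ x) = (ℝ ∙ (o₂ - o₁))ᗮ := by
        apply Submodule.eq_of_le_of_finrank_le
        · rw [Submodule.span_singleton_le_iff_mem]; exact hx.1
        · rw [finrank_span_singleton hx0, hf3]
      have e2 : (ℝ ∙ x) = (ℝ ∙ (o₃ - o₁))ᗮ := by
        apply Submodule.eq_of_le_of_finrank_le
        · rw [Submodule.span_singleton_le_iff_mem]; exact hx.2
        · rw [finrank_span_singleton hx0, hf2]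
      exact h (e3 ▸ e2)
    have hsup : (affineSpan ℝ (sphere o₁ r₁ ∩ sphere o₃ r₃)).direction ⊔
        (affineSpan ℝ (sphere o₁ r₁ ∩ sphere o₂ r₂)).direction = ⊤ := by
      rw [hdir2, hdir3]
      apply Submodule.eq_top_of_finrank_eq
      have hsi := Submodule.finrank_sup_add_finrank_inf_eq
        ((ℝ ∙ (o₃ - o₁))ᗮ) ((ℝ ∙ (o₂ - o₁))ᗮ)
      rw [inf_comm] at hsi
      rw [hinf] at hsi
      simp only [finrank_bot] at hsi
      rw [hf2, hf3] at hsi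
      rw [finrank_E2]
      omega
    obtain ⟨x, hx⟩ := AffineSubspace.inter_nonempty_of_nonempty_of_sup_direction_eq_top
      hne2 hne3 hsup
    refine ⟨x, ?_, hx.1, hx.2⟩
    have h2 : ‖x - o₁‖ ^ 2 - r₁ ^ 2 = ‖x - o₃‖ ^ 2 - r₃ ^ 2 := by
      have := hx.1
      rw [hset2] at this
      exact this
    have h3 : ‖x - o₁‖ ^ 2 - r₁ ^ 2 = ‖x - o₂‖ ^ 2 - r₂ ^ 2 := by
      have := hx.2
      rw [hset3] at this
      exact this
    rw [← AffineSubspace.mem_coe, hset1]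
    show ‖x - o₂‖ ^ 2 - r₂ ^ 2 = ‖x - o₃‖ ^ 2 - r₃ ^ 2
    linarith
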